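/- For every n ≥ 1, Σ_{F ∈ F(n)} ∏_{v ∈ F} 1/h_v² = (n+1)!/2^n, where F(n) is the set of labeled rooted forests on vertex set {1,...,n}. -/

import Mathlib

/-!
Let `e(F)` be the number of linear extensions of a forest `F` (orderings of the vertices in which
every parent precedes its children). Deleting a root proves the hook length formula
`e(F) · ∏ h_v = n!`, so the sum equals `∑_F e(F)² / n!²`, and `∑_F e(F)²` counts the triples
`(F, π, σ)` in which both orderings `π` and `σ` extend `F`. For fixed `π, σ` these `F` arise by
giving each vertex `v` either no parent or one of the `c_v` vertices preceding it in both orderings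
(such a parent map is automatically acyclic), so there are `∏_v (c_v + 1)` of them. Removing the
last vertex of `π`, which sits at position `k` of `σ`, divides this weight by `k + 1`; hence the
total weight `T_n` satisfies `T_{n+1} = (n + 1) · (n + 1)(n + 2)/2 · T_n`, and
`T_n = n!² (n + 1)!/2ⁿ`.
-/

/-- The parent relation associated to a parent map on `Fin n`. -/
def parentRel {n : ℕ} (p : Fin n → Option (Fin n)) : Fin n → Fin n → Prop :=
  fun a b => p a = some b

/-- A parent map on `{1, …, n}` is a (labeled rooted) forest if it has no cycles. -/
def IsRForest {n : ℕ} (p : Fin n → Option (Fin n)) : Prop :=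
  ∀ v, ¬ Relation.TransGen (parentRel p) v v

/-- A labeled rooted tree on `{1, …, n}`: an acyclic parent map with a unique root. -/
def IsRTree {n : ℕ} (p : Fin n → Option (Fin n)) : Prop :=
  IsRForest p ∧ ∃! r, p r = none

/-- The hook length of `v`: the number of descendants of `v`, counting `v` itself. -/
noncomputable def hookLen {n : ℕ} (p : Fin n → Option (Fin n)) (v : Fin n) : ℕ :=
  Nat.card {u : Fin n // Relation.ReflTransGen (parentRel p) u v}

lemma hookLen_pos {n : ℕ} (p : Fin n → Option (Fin n)) (v : Fin n) : 0 < hookLen p v :=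
  @Nat.card_pos _ ⟨⟨v, Relation.ReflTransGen.refl⟩⟩ _

/-- The hook length of `v` as a positive natural number. -/
noncomputable def hook {n : ℕ} (p : Fin n → Option (Fin n)) (v : Fin n) : ℕ+ :=
  ⟨hookLen p v, hookLen_pos p v⟩

open Finset Relation Nat

theorem card_filter_option_forall_mem {β : Type*} [Fintype β] (P : β → Prop) [DecidablePred P] :
    #{o : Option β | ∀ b ∈ o, P b} = #{b | P b} + 1 := by
  rw [card_filter, card_filter, Fintype.sum_option]
  simp [add_comm]

theorem card_filter_pi_option {α β : Type*} [Fintype α] [DecidableEq α] [Fintype β]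
    (C : α → β → Prop) [∀ a, DecidablePred (C a)] :
    #{f : α → Option β | ∀ a, ∀ b ∈ f a, C a b} = ∏ a, (#{b | C a b} + 1) := by
  have : ({f : α → Option β | ∀ a, ∀ b ∈ f a, C a b} : Finset _) =
      Fintype.piFinset fun a => {o | ∀ b ∈ o, C a b} := by
    ext f
    simp
  rw [this, Fintype.card_piFinset]
  exact prod_congr rfl fun a _ => card_filter_option_forall_mem (C a)

theorem Fin.sum_val_add_one_mul_two (n : ℕ) :
    (∑ k : Fin (n + 1), ((k : ℕ) + 1)) * 2 = (n + 1) * (n + 2) := by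
  induction n with
  | zero => rfl
  | succ n ih =>
    rw [Fin.sum_univ_castSucc, add_mul]
    simp only [Fin.val_castSucc, Fin.val_last, ih]
    ring

theorem card_filter_apply_lt {α : Type*} [Fintype α] {m : ℕ} (σ : α ≃ Fin m) (k : Fin m) :
    #{u | σ u < k} = k := by
  rw [← Fin.card_Iio k]
  exact card_equiv σ fun u => by simp

def pairWeight {α : Type*} [Fintype α] {n : ℕ} (π σ : α ≃ Fin n) : ℕ :=
  ∏ v, (#{u | π u < π v ∧ σ u < σ v} + 1)

section InsertRank

variable {α : Type*} [DecidableEq α] {n : ℕ}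

def insertRank (a : α) (k : Fin (n + 1)) :
    ({x // x ≠ a} ≃ Fin n) ≃ {e : α ≃ Fin (n + 1) // e a = k} :=
  ((Equiv.refl _).equivCongr (finSuccAboveEquiv k)).trans <|
    (Equiv.optionSubtype k).symm.trans <|
      (Equiv.equivCongr (Equiv.optionSubtypeNe a) (Equiv.refl _)).subtypeEquiv fun E => by simp

@[simp]
theorem insertRank_apply_self (a : α) (k : Fin (n + 1)) (e : {x // x ≠ a} ≃ Fin n) :
    (insertRank a k e : α ≃ Fin (n + 1)) a = k :=
  (insertRank a k e).2

theorem insertRank_apply_of_ne {a x : α} (hx : x ≠ a) (k : Fin (n + 1))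
    (e : {x // x ≠ a} ≃ Fin n) :
    (insertRank a k e : α ≃ Fin (n + 1)) x = k.succAbove (e ⟨x, hx⟩) := by
  simp [insertRank, Equiv.optionSubtypeNe_symm_of_ne hx, finSuccAboveEquiv_apply]

variable [Fintype α]

theorem sum_equiv_fin_succ_fiberwise_apply {M : Type*} [AddCommMonoid M] (a : α)
    (f : (α ≃ Fin (n + 1)) → M) :
    ∑ e, f e = ∑ k, ∑ e : {x // x ≠ a} ≃ Fin n, f (insertRank a k e).1 := by
  rw [← Fintype.sum_fiberwise (fun e => e a) f]
  exact Fintype.sum_congr _ _ fun k => (Equiv.sum_comp (insertRank a k) (f ·.1)).symm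

theorem sum_equiv_fin_succ_fiberwise_symm_apply {M : Type*} [AddCommMonoid M] (k : Fin (n + 1))
    (f : (α ≃ Fin (n + 1)) → M) :
    ∑ e, f e = ∑ a, ∑ e : {x // x ≠ a} ≃ Fin n, f (insertRank a k e).1 := by
  rw [← Fintype.sum_fiberwise (fun e => e.symm k) f]
  refine Fintype.sum_congr _ _ fun a => ?_
  rw [Equiv.sum_comp (insertRank a k) (f ·.1)]
  exact Fintype.sum_equiv (Equiv.subtypeEquivRight fun e => e.symm_apply_eq.trans eq_comm) _ _
    fun _ => rfl

theorem pairWeight_insertRank (a : α) (k : Fin (n + 1)) (π σ : {x // x ≠ a} ≃ Fin n) :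
    pairWeight (insertRank a (Fin.last n) π).1 (insertRank a k σ).1 =
      (k + 1) * pairWeight π σ := by
  set π₁ := (insertRank a (Fin.last n) π).1
  set σ₁ := (insertRank a k σ).1
  have hπ₁ (u : {x // x ≠ a}) : π₁ u = (π u).castSucc := by
    simp [π₁, insertRank_apply_of_ne u.2]
  have hσ₁ (u : {x // x ≠ a}) : σ₁ u = k.succAbove (σ u) := insertRank_apply_of_ne u.2 _ _
  rw [pairWeight, Fintype.prod_eq_mul_prod_subtype_ne _ a, pairWeight, ← card_filter_apply_lt σ₁]
  congr 1
  · congr 2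
    ext u
    suffices σ₁ u < k → π₁ u < Fin.last n by simpa [π₁, σ₁] using this
    intro hu
    have hua : u ≠ a := by rintro rfl; simp [σ₁] at hu
    lift u to {x // x ≠ a} using hua
    simp [hπ₁]
  · refine prod_congr rfl fun v _ => congrArg (· + 1) ?_
    symm
    refine card_bij (fun u _ => u.1) ?_ (fun _ _ _ _ => Subtype.ext) ?_
    · intro u hu
      simpa [hπ₁, hσ₁, Fin.succAbove_lt_succAbove_iff] using hu
    · intro u hu
      have hua : u ≠ a := by
        rintro rfl
        exact (Fin.le_last _).not_gt (by simpa [π₁] using (mem_filter.1 hu).2.1)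
      lift u to {x // x ≠ a} using hua
      exact ⟨u, by simpa [hπ₁, hσ₁, Fin.succAbove_lt_succAbove_iff] using hu, rfl⟩

end InsertRank

theorem sum_pairWeight_mul_two_pow {α : Type*} [Fintype α] [DecidableEq α] {n : ℕ}
    (hα : Fintype.card α = n) :
    (∑ π : α ≃ Fin n, ∑ σ : α ≃ Fin n, pairWeight π σ) * 2 ^ n = n ! ^ 2 * (n + 1)! := by
  induction n generalizing α with
  | zero =>
    have := Fintype.card_eq_zero_iff.1 hα
    simp [pairWeight, Fintype.card_equiv (Fintype.equivFinOfCardEq hα)]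
  | succ n ih =>
    have hsum : ∑ π : α ≃ Fin (n + 1), ∑ σ : α ≃ Fin (n + 1), pairWeight π σ =
        ∑ a : α, (∑ k : Fin (n + 1), ((k : ℕ) + 1)) *
          ∑ π : {x // x ≠ a} ≃ Fin n, ∑ σ : {x // x ≠ a} ≃ Fin n, pairWeight π σ := by
      rw [sum_equiv_fin_succ_fiberwise_symm_apply (Fin.last n)]
      refine sum_congr rfl fun a _ => ?_
      simp_rw [sum_equiv_fin_succ_fiberwise_apply a (pairWeight _), pairWeight_insertRank,
        ← mul_sum]
      rw [mul_sum]
      simp_rw [sum_mul]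
    have hcard (a : α) : Fintype.card {x // x ≠ a} = n := by
      simp [Fintype.card_subtype_compl, hα]
    calc (∑ π : α ≃ Fin (n + 1), ∑ σ : α ≃ Fin (n + 1), pairWeight π σ) * 2 ^ (n + 1)
        = ∑ a : α, ((∑ k : Fin (n + 1), ((k : ℕ) + 1)) * 2) *
            ((∑ π : {x // x ≠ a} ≃ Fin n, ∑ σ : {x // x ≠ a} ≃ Fin n, pairWeight π σ) *
              2 ^ n) := by
          rw [hsum, sum_mul]
          exact sum_congr rfl fun _ _ => by ring
      _ = (n + 1)! ^ 2 * (n + 2)! := by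
          simp only [Fin.sum_val_add_one_mul_two, ih (hcard _), sum_const, Finset.card_univ, hα,
            smul_eq_mul, factorial_succ]
          ring

-- `rel`, `IsForest` and `hookLength` are `parentRel`, `IsRForest` and `hookLen` over an arbitrary
-- vertex type (deleting a root leaves a subtype); on `Fin n` they agree definitionally.
namespace ParentMap

variable {α : Type*} (p : α → Option α)

def rel : α → α → Prop := fun a b => p a = some b

def IsForest : Prop := ∀ v, ¬ TransGen (rel p) v v

noncomputable def hookLength (v : α) : ℕ := Nat.card {u // ReflTransGen (rel p) u v}

def IsLinearExtension {n : ℕ} (e : α ≃ Fin n) : Prop := ∀ ⦃a b⦄, rel p a b → e b < e a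

instance [DecidableEq α] [Fintype α] {n : ℕ} : DecidablePred (IsLinearExtension p (n := n)) :=
  fun _ => by unfold IsLinearExtension rel; infer_instance

def eraseRoot [DecidableEq α] (r : α) (x : {x // x ≠ r}) : Option {x // x ≠ r} :=
  (p x).bind (Equiv.optionSubtypeNe r).symm

theorem hookLength_pos [Finite α] (v : α) : 0 < hookLength p v :=
  have : Nonempty {u // ReflTransGen (rel p) u v} := ⟨⟨v, .refl⟩⟩
  Nat.card_pos

variable {p}

theorem IsLinearExtension.isForest {n : ℕ} {e : α ≃ Fin n} (he : IsLinearExtension p e) :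
    IsForest p := by
  have rank_lt {a b : α} (h : TransGen (rel p) a b) : e b < e a := by
    induction h with
    | single h => exact he h
    | tail _ h ih => exact (he h).trans ih
  exact fun v hv => (rank_lt hv).false

theorem eq_of_reflTransGen_of_eq_none {r s : α} (hr : p r = none)
    (h : ReflTransGen (rel p) r s) : r = s := by
  rcases h.cases_head with h | ⟨c, hc, _⟩
  · exact h
  · simp [rel, hr] at hc

theorem ne_of_reflTransGen {r u v : α} (hr : p r = none) (hv : v ≠ r)
    (h : ReflTransGen (rel p) u v) : u ≠ r := by
  rintro rfl
  exact hv (eq_of_reflTransGen_of_eq_none hr h).symm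

theorem IsForest.existsUnique_root [Finite α] (hp : IsForest p) (u : α) :
    ∃! r, p r = none ∧ ReflTransGen (rel p) u r := by
  have : IsTrans α (flip (TransGen (rel p))) := ⟨fun _ _ _ h h' => h'.trans h⟩
  have : Std.Irrefl (flip (TransGen (rel p))) := ⟨hp⟩
  have wf := Finite.wellFounded_of_trans_of_irrefl (flip (TransGen (rel p)))
  obtain ⟨r, hr, hur⟩ : ∃ r, p r = none ∧ ReflTransGen (rel p) u r := by
    induction u using wf.induction with
    | _ u ih =>
      cases h : p u with
      | none => exact ⟨u, h, .refl⟩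
      | some b =>
        obtain ⟨r, hr, hbr⟩ := ih b (.single h)
        exact ⟨r, hr, .head h hbr⟩
  refine ⟨r, ⟨hr, hur⟩, fun s ⟨hs, hus⟩ => ?_⟩
  have functional : Relator.RightUnique (rel p) := fun _ _ _ h h' =>
    Option.some_injective _ (h.symm.trans h')
  rcases hus.total_of_right_unique functional hur with h | h
  · exact eq_of_reflTransGen_of_eq_none hs h
  · exact (eq_of_reflTransGen_of_eq_none hr h).symm

theorem IsForest.sum_hookLength_roots [Fintype α] (hp : IsForest p) :
    ∑ r with p r = none, hookLength p r = Fintype.card α := by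
  classical
  have hook (r : α) : hookLength p r = #(bipartiteBelow (ReflTransGen (rel p)) univ r) := by
    rw [hookLength, Nat.card_eq_fintype_card, Fintype.card_subtype]
    rfl
  have one (u : α) : #(bipartiteAbove (ReflTransGen (rel p)) {r | p r = none} u) = 1 := by
    obtain ⟨r, hr, huniq⟩ := hp.existsUnique_root u
    refine card_eq_one.2 ⟨r, ext fun s => ?_⟩
    simp only [bipartiteAbove, mem_filter, mem_univ, true_and, mem_singleton]
    exact ⟨huniq s, fun h => h ▸ hr⟩
  rw [sum_congr rfl fun r _ => hook r, ← sum_card_bipartiteAbove_eq_sum_card_bipartiteBelow]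
  simp [one]

section Counting

variable [Fintype α] [DecidableEq α]

theorem card_filter_isLinearExtension_and {n : ℕ} (π σ : α ≃ Fin n) :
    #{p : α → Option α | IsLinearExtension p π ∧ IsLinearExtension p σ} = pairWeight π σ := by
  rw [pairWeight, ← card_filter_pi_option]
  congr 1
  ext p
  simp only [mem_filter, mem_univ, true_and]
  simp [IsLinearExtension, rel, forall_and]

theorem sum_card_linearExtensions_sq (n : ℕ) :
    ∑ p : α → Option α, #{e : α ≃ Fin n | IsLinearExtension p e} ^ 2 =
      ∑ π : α ≃ Fin n, ∑ σ : α ≃ Fin n, pairWeight π σ := by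
  simp_rw [← card_filter_isLinearExtension_and, card_filter, sq, sum_mul_sum,
    ite_zero_mul_ite_zero, mul_one]
  rw [sum_comm]
  exact sum_congr rfl fun _ _ => sum_comm

end Counting

section EraseRoot

variable [DecidableEq α] {r : α}

theorem rel_eraseRoot_iff {x y : {x // x ≠ r}} : rel (eraseRoot p r) x y ↔ rel p x y := by
  simp only [rel, eraseRoot, Option.bind_eq_some_iff, Equiv.symm_apply_eq]
  constructor
  · rintro ⟨a, ha, rfl⟩
    exact ha
  · exact fun h => ⟨y, h, rfl⟩

theorem isForest_eraseRoot (hp : IsForest p) (r : α) : IsForest (eraseRoot p r) :=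
  fun v hv => hp v (hv.lift Subtype.val fun _ _ => rel_eraseRoot_iff.1)

theorem reflTransGen_eraseRoot_iff (hr : p r = none) {u v : {x // x ≠ r}} :
    ReflTransGen (rel (eraseRoot p r)) u v ↔ ReflTransGen (rel p) u v := by
  refine ⟨fun h => h.lift Subtype.val fun _ _ => rel_eraseRoot_iff.1, fun h => ?_⟩
  obtain ⟨u, hu⟩ := u
  change ReflTransGen (rel p) u v at h
  revert hu
  induction h using ReflTransGen.head_induction_on with
  | refl => exact fun _ => .refl
  | head hab hbv ih =>
    have hb := ne_of_reflTransGen hr v.2 hbv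
    exact fun ha => .head (rel_eraseRoot_iff (x := ⟨_, ha⟩) (y := ⟨_, hb⟩) |>.2 hab) (ih hb)

theorem hookLength_eraseRoot (hr : p r = none) (v : {x // x ≠ r}) :
    hookLength (eraseRoot p r) v = hookLength p v :=
  Nat.card_congr <| (Equiv.subtypeEquivRight fun _ => reflTransGen_eraseRoot_iff hr).trans <|
    Equiv.subtypeSubtypeEquivSubtype (p := (· ≠ r)) (q := (ReflTransGen (rel p) · v))
      (ne_of_reflTransGen hr v.2)

theorem isLinearExtension_insertRank_zero_iff {n : ℕ} {e : {x // x ≠ r} ≃ Fin n} :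
    IsLinearExtension p (insertRank r 0 e).1 ↔
      p r = none ∧ IsLinearExtension (eraseRoot p r) e := by
  set e₁ := (insertRank r 0 e).1
  have he₁r : e₁ r = 0 := insertRank_apply_self r 0 e
  have he₁ {x : α} (hx : x ≠ r) : e₁ x = (e ⟨x, hx⟩).succ := insertRank_apply_of_ne hx 0 e
  constructor
  · intro h
    refine ⟨Option.eq_none_iff_forall_ne_some.2 fun b hb => ?_, fun x y hxy => ?_⟩
    · exact Fin.not_lt_zero _ (he₁r ▸ h hb)
    · simpa [he₁ x.2, he₁ y.2] using h (rel_eraseRoot_iff.1 hxy)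
  · rintro ⟨hr, h⟩ a b hab
    have ha : a ≠ r := by rintro rfl; simp [rel, hr] at hab
    by_cases hb : b = r
    · rw [hb, he₁r, he₁ ha]
      exact Fin.succ_pos _
    · rw [he₁ ha, he₁ hb, Fin.succ_lt_succ_iff]
      exact h (rel_eraseRoot_iff (x := ⟨a, ha⟩) (y := ⟨b, hb⟩) |>.2 hab)

theorem card_linearExtensions_succ [Fintype α] {n : ℕ} :
    #{e : α ≃ Fin (n + 1) | IsLinearExtension p e} =
      ∑ r with p r = none, #{e : {x // x ≠ r} ≃ Fin n | IsLinearExtension (eraseRoot p r) e} := by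
  rw [card_filter, sum_equiv_fin_succ_fiberwise_symm_apply 0, sum_filter]
  refine sum_congr rfl fun r _ => ?_
  simp_rw [isLinearExtension_insertRank_zero_iff]
  split_ifs with hr
  · rw [card_filter]
    simp [hr]
  · simp [hr]

theorem IsForest.prod_hookLength_mul_card_linearExtensions [Fintype α] {n : ℕ}
    (hp : IsForest p) (hα : Fintype.card α = n) :
    (∏ v, hookLength p v) * #{e : α ≃ Fin n | IsLinearExtension p e} = n ! := by
  induction n generalizing α with
  | zero =>
    have := Fintype.card_eq_zero_iff.1 hα
    simp [Fintype.card_equiv (Fintype.equivFinOfCardEq hα), IsLinearExtension]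
  | succ n ih =>
    have hcard (r : α) : Fintype.card {x // x ≠ r} = n := by
      simp [Fintype.card_subtype_compl, hα]
    calc (∏ v, hookLength p v) * #{e : α ≃ Fin (n + 1) | IsLinearExtension p e}
        = ∑ r with p r = none, hookLength p r *
            ((∏ v : {x // x ≠ r}, hookLength (eraseRoot p r) v) *
              #{e : {x // x ≠ r} ≃ Fin n | IsLinearExtension (eraseRoot p r) e}) := by
          rw [card_linearExtensions_succ, mul_sum]
          refine sum_congr rfl fun r hr => ?_
          rw [Fintype.prod_eq_mul_prod_subtype_ne _ r, mul_assoc]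
          simp only [hookLength_eraseRoot (mem_filter.1 hr).2]
      _ = (n + 1)! := by
          simp_rw [ih (isForest_eraseRoot hp _) (hcard _), ← sum_mul, hp.sum_hookLength_roots, hα,
            factorial_succ]

end EraseRoot

theorem IsForest.prod_one_div_hookLength_sq [Fintype α] [DecidableEq α] (hp : IsForest p) :
    ∏ v, 1 / (hookLength p v : ℚ) ^ 2 =
      (#{e : α ≃ Fin (Fintype.card α) | IsLinearExtension p e} : ℚ) ^ 2 /
        ((Fintype.card α)! : ℚ) ^ 2 := by
  have h : (∏ v, (hookLength p v : ℚ)) * #{e : α ≃ Fin (Fintype.card α) | IsLinearExtension p e} =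
      (Fintype.card α)! := by
    exact_mod_cast hp.prod_hookLength_mul_card_linearExtensions rfl
  have : ∀ v, (hookLength p v : ℚ) ≠ 0 := fun v => by exact_mod_cast (hookLength_pos p v).ne'
  have hE : (#{e : α ≃ Fin (Fintype.card α) | IsLinearExtension p e} : ℚ) ≠ 0 := by
    rintro h0
    simp [h0, eq_comm, factorial_ne_zero] at h
  rw [← h, prod_div_distrib, prod_const_one, prod_pow, mul_pow]
  field_simp

theorem sum_prod_one_div_hookLength_sq [Fintype α] [DecidableEq α] :
    ∑ᶠ p : {p : α → Option α // IsForest p}, ∏ v, 1 / (hookLength p.1 v : ℚ) ^ 2 =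
      ((Fintype.card α + 1)! : ℚ) / 2 ^ Fintype.card α := by
  set n := Fintype.card α
  have hT := sum_pairWeight_mul_two_pow (α := α) rfl
  rw [← sum_card_linearExtensions_sq] at hT
  calc ∑ᶠ p : {p // IsForest p}, ∏ v, 1 / (hookLength p.1 v : ℚ) ^ 2
      = ∑ p, (#{e : α ≃ Fin n | IsLinearExtension p e} : ℚ) ^ 2 / (n ! : ℚ) ^ 2 := by
        rw [finsum_congr fun p => p.2.prod_one_div_hookLength_sq,
          finsum_subtype_eq_finsum_cond
            (f := fun p => (#{e : α ≃ Fin n | IsLinearExtension p e} : ℚ) ^ 2 / (n ! : ℚ) ^ 2),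
          finsum_eq_sum_of_fintype]
        refine sum_congr rfl fun p _ => ?_
        by_cases hp : IsForest p
        · simp [hp]
        · have : #{e : α ≃ Fin n | IsLinearExtension p e} = 0 :=
            card_eq_zero.2 (filter_eq_empty_iff.2 fun e _ he => hp he.isForest)
          simp [hp, this]
    _ = ((n + 1)! : ℚ) / 2 ^ n := by
        rw [← sum_div, div_eq_div_iff (by positivity) (by positivity)]
        exact_mod_cast hT.trans (mul_comm _ _)

end ParentMap

theorem hook_squared_formula_forests_general (n : ℕ) :
    ∑ᶠ p : {p : Fin n → Option (Fin n) // IsRForest p},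
      ∏ v : Fin n, 1 / (hookLen (p : Fin n → Option (Fin n)) v : ℚ) ^ 2
    = ((n + 1).factorial : ℚ) / 2 ^ n := by
  have h := ParentMap.sum_prod_one_div_hookLength_sq (α := Fin n)
  rw [Fintype.card_fin] at h
  exact h

/-- A hook length formula for labeled forests. -/
theorem hook_squared_formula_forests (n : ℕ) (hn : 1 ≤ n) :
    ∑ᶠ p : {p : Fin n → Option (Fin n) // IsRForest p},
      ∏ v : Fin n, 1 / (hookLen (p : Fin n → Option (Fin n)) v : ℚ) ^ 2
    = ((n + 1).factorial : ℚ) / 2 ^ n :=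
  hook_squared_formula_forests_general n
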